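/- Let V be a ℂ-vector space with a subspace W, let f : Finset α → V with v₀ = f(∅), and let L be a finite set with |L| = N ≥ k. Suppose: (i) f(ℓ) = v₀ for every ℓ ⊆ L with |ℓ| < k, and (ii) for every ℓ ⊆ L with |ℓ| ≥ k, the alternating sum Σ_{ℓ' ⊆ ℓ} (-1)^{|ℓ'|} f(ℓ') lies in W. Then f(L) - v₀ ∈ W. -/
import Mathlib


theorem stmt3 {α : Type*} {V : Type*} [AddCommGroup V] [Module ℂ V]
    (W : Submodule ℂ V) (f : Finset α → V) (v₀ : V) (hv₀ : v₀ = f ∅)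
    (L : Finset α) (N k : ℕ) (hN : L.card = N) (hkN : k ≤ N)
    (h1 : ∀ ℓ ⊆ L, ℓ.card < k → f ℓ = v₀)
    (h2 : ∀ ℓ ⊆ L, k ≤ ℓ.card →
      (∑ ℓ' ∈ ℓ.powerset, ((-1 : ℂ) ^ ℓ'.card) • f ℓ') ∈ W) :
    f L - v₀ ∈ W := by
  classical
  set π := W.mkQ with hπ
  have key : ∀ n : ℕ, ∀ ℓ ⊆ L, ℓ.card = n → π (f ℓ) = π v₀ := by
    intro n
    induction n using Nat.strong_induction_on with
    | _ n ih =>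
      intro ℓ hℓL hcard
      by_cases hlt : ℓ.card < k
      · rw [h1 ℓ hℓL hlt]
      · push_neg at hlt
        rcases eq_or_ne ℓ ∅ with rfl | hne
        · rw [hv₀]
        · have hsum := h2 ℓ hℓL hlt
          have h0 : ∑ ℓ' ∈ ℓ.powerset, ((-1 : ℂ) ^ ℓ'.card) • π (f ℓ') = 0 := by
            have := (Submodule.Quotient.mk_eq_zero W).2 hsum
            rw [show (Submodule.Quotient.mk : V → V ⧸ W) = π from rfl] at this
            rw [← this, map_sum]
            simp [π]
          have hmem : ℓ ∈ ℓ.powerset := Finset.mem_powerset_self ℓ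
          rw [← Finset.sum_erase_add _ _ hmem] at h0
          have herase : ∀ ℓ' ∈ ℓ.powerset.erase ℓ, ((-1 : ℂ) ^ ℓ'.card) • π (f ℓ')
              = ((-1 : ℂ) ^ ℓ'.card) • π v₀ := by
            intro ℓ' hℓ'
            rw [Finset.mem_erase, Finset.mem_powerset] at hℓ'
            have hss : ℓ' ⊂ ℓ := hℓ'.2.ssubset_of_ne hℓ'.1
            rw [ih ℓ'.card (hcard ▸ Finset.card_lt_card hss) ℓ'
              (hℓ'.2.trans hℓL) rfl]
          rw [Finset.sum_congr rfl herase, ← Finset.sum_smul] at h0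
          have hzero : ∑ ℓ' ∈ ℓ.powerset, ((-1 : ℂ) ^ ℓ'.card) = 0 := by
            have hz := Finset.sum_powerset_neg_one_pow_card_of_nonempty
              (Finset.nonempty_iff_ne_empty.2 hne)
            have : ((∑ m ∈ ℓ.powerset, (-1 : ℤ) ^ m.card : ℤ) : ℂ) = 0 := by
              exact_mod_cast congrArg (Int.cast : ℤ → ℂ) hz
            push_cast at this
            exact this
          have hcoef : ∑ ℓ' ∈ ℓ.powerset.erase ℓ, ((-1 : ℂ) ^ ℓ'.card)
              = -(-1 : ℂ) ^ ℓ.card := by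
            have := Finset.sum_erase_add ℓ.powerset (fun ℓ' => ((-1 : ℂ) ^ ℓ'.card)) hmem
            rw [hzero] at this
            exact eq_neg_of_add_eq_zero_left this
          rw [hcoef] at h0
          have : ((-1 : ℂ) ^ ℓ.card) • π (f ℓ) = ((-1 : ℂ) ^ ℓ.card) • π v₀ := by
            rw [neg_smul, neg_add_eq_zero] at h0
            exact h0.symm
          exact smul_right_injective _ (by
            simp : ((-1 : ℂ) ^ ℓ.card) ≠ 0) this
  have := key L.card L (le_refl _) rfl
  rwa [hπ, Submodule.mkQ_apply, Submodule.mkQ_apply, Submodule.Quotient.eq] at this
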